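/- For all integers n ≥ 0: F_{2n+2}(q) = a · Σ_{i=0}^{n} Σ_{j=0}^{n} (ab)^{ξ(n−i−j)} · q^{i² + (n+i+1)j} · qbinom(n−j, i) · qbinom(n−i, j) · (ab)^{2⌊(n−i−j)/2⌋}, where terms with i+j > n are zero. -/
import Mathlib


open Finset PowerSeries

variable {R : Type*} [CommRing R]

/-- The Gaussian (q-)binomial coefficient, via the Pascal-type recurrence
`[n+1, k+1] = q^(n-k) [n, k] + [n, k+1]`. -/
def qbinom (q : R) : ℕ → ℕ → R
  | _, 0 => 1
  | 0, _ + 1 => 0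
  | n + 1, k + 1 => qbinom q n k * q ^ (n - k) + qbinom q n (k + 1)

/-- The q-biperiodic Fibonacci sequence. -/
def biF (a b q : R) : ℕ → R
  | 0 => 0
  | 1 => 1
  | n + 2 => (if (n + 2) % 2 = 0 then a else b) * biF a b q (n + 1) + q ^ n * biF a b q n

/-- The auxiliary q-biperiodic Fibonacci sequence (same recurrence, initial values 1, 0). -/
def biFhat (a b q : R) : ℕ → R
  | 0 => 1
  | 1 => 0
  | n + 2 => (if (n + 2) % 2 = 0 then a else b) * biFhat a b q (n + 1) + q ^ n * biFhat a b q n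

/-- The biperiodic Fibonacci sequence. -/
def biT (a b : ℕ) : ℕ → ℕ
  | 0 => 0
  | 1 => 1
  | n + 2 => (if (n + 2) % 2 = 0 then a else b) * biT a b (n + 1) + biT a b n

/-- The Schur polynomials D_n(q). -/
def schurD (q : R) : ℕ → R
  | 0 => 0
  | 1 => 1
  | n + 2 => schurD q (n + 1) + q ^ n * schurD q n

/-- The auxiliary Schur polynomials with initial values 1, 0. -/
def schurDhat (q : R) : ℕ → R
  | 0 => 1
  | 1 => 0
  | n + 2 => schurDhat q (n + 1) + q ^ n * schurDhat q n

/-- The shifted q-biperiodic Fibonacci sequence F^(s)_n(q). -/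
def biFs (a b q : R) (s : ℕ) : ℕ → R
  | 0 => 0
  | 1 => 1
  | n + 2 =>
      (if (n + 2) % 2 = 0 then a ^ ((s + 1) % 2) * b ^ (1 - (s + 1) % 2)
       else a ^ (1 - (s + 1) % 2) * b ^ ((s + 1) % 2)) * biFs a b q s (n + 1)
        + q ^ (n + s) * biFs a b q s n

lemma qbinom_zero_right (q : R) (n : ℕ) : qbinom q n 0 = 1 := by
  cases n <;> rfl

lemma qbinom_zero_succ (q : R) (k : ℕ) : qbinom q 0 (k + 1) = 0 := rfl

lemma qbinom_succ_succ (q : R) (n k : ℕ) :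
    qbinom q (n + 1) (k + 1) = qbinom q n k * q ^ (n - k) + qbinom q n (k + 1) := rfl

lemma qbinom_eq_zero (q : R) : ∀ {n k : ℕ}, n < k → qbinom q n k = 0 := by
  intro n
  induction n with
  | zero => intro k h; cases k with
    | zero => omega
    | succ k => rfl
  | succ n ih =>
    intro k h
    cases k with
    | zero => omega
    | succ k =>
      rw [qbinom_succ_succ, ih (by omega), ih (by omega)]
      ring

lemma qbinom_diag (q : R) (n : ℕ) : qbinom q n n = 1 := by
  induction n with
  | zero => rfl
  | succ n ih =>
    rw [qbinom_succ_succ, ih, qbinom_eq_zero q (by omega)]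
    simp

lemma qbinom_one_mul (q : R) (m : ℕ) : (q - 1) * qbinom q m 1 = q ^ m - 1 := by
  induction m with
  | zero => rw [qbinom_eq_zero q (by omega)]; ring
  | succ m ih =>
    have h : qbinom q (m+1) 1 = q ^ m + qbinom q m 1 := by
      rw [qbinom_succ_succ, qbinom_zero_right, Nat.sub_zero]; ring
    rw [h]
    have : q ^ (m+1) = q * q ^ m := by ring
    rw [this]
    linear_combination ih

lemma pascal2 (q : R) : ∀ (m k : ℕ),
    qbinom q (m + 1) (k + 1) = qbinom q m k + q ^ (k + 1) * qbinom q m (k + 1) := by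
  intro m
  induction m with
  | zero =>
    intro k
    cases k with
    | zero => simp [qbinom_succ_succ, qbinom_zero_right, qbinom_zero_succ]
    | succ k => simp [qbinom_succ_succ, qbinom_zero_succ]
  | succ m ih =>
    intro k
    cases k with
    | zero =>
      rw [qbinom_succ_succ, qbinom_zero_right, Nat.sub_zero]
      linear_combination - qbinom_one_mul q (m + 1)
    | succ k =>
      have lhs_eq : qbinom q (m + 1 + 1) (k + 1 + 1)
          = (qbinom q m k + q ^ (k+1) * qbinom q m (k+1)) * q ^ (m - k)
            + (qbinom q m (k+1) + q ^ (k+2) * qbinom q m (k+2)) := by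
        rw [qbinom_succ_succ, show m + 1 - (k+1) = m - k by omega, ih k,
          show k + 1 + 1 = k + 2 by rfl, ih (k+1)]
      have rhs1 : qbinom q (m + 1) (k + 1) = qbinom q m k * q ^ (m - k) + qbinom q m (k+1) :=
        qbinom_succ_succ q m k
      have rhs2 : qbinom q (m + 1) (k + 2) = qbinom q m (k+1) * q ^ (m - (k+1)) + qbinom q m (k+2) :=
        qbinom_succ_succ q m (k+1)
      rw [lhs_eq, show k + 1 + 1 = k + 2 by rfl, rhs1, rhs2]
      rcases le_or_gt (k + 1) m with h | h
      · have : q ^ (k+1) * q ^ (m - k) = q ^ (k+2) * q ^ (m - (k+1)) := by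
          rw [← pow_add, ← pow_add, show k + 1 + (m - k) = k + 2 + (m - (k+1)) by omega]
        linear_combination qbinom q m (k+1) * this
      · rw [qbinom_eq_zero q (show m < k + 1 by omega),
          qbinom_eq_zero q (show m < k + 2 by omega)]
        ring

lemma abs_aux (q : R) : ∀ m : ℕ,
    (∀ j : ℕ, qbinom q m (j+1) * (q ^ (j+1) - 1) = (q ^ m - 1) * qbinom q (m-1) j) ∧
    (∀ i : ℕ, qbinom q m i * (q ^ (m-i) - 1) = (q ^ m - 1) * qbinom q (m-1) i) := by
  intro m
  induction m with
  | zero =>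
    constructor
    · intro j; rw [qbinom_zero_succ]; simp
    · intro i; simp
  | succ m ih =>
    obtain ⟨ih1, ih2⟩ := ih
    have A1 : ∀ j : ℕ, qbinom q (m+1) (j+1) * (q ^ (j+1) - 1)
        = (q ^ (m+1) - 1) * qbinom q m j := by
      intro j
      rw [qbinom_succ_succ]
      rcases le_or_gt j m with h | h
      · have key : qbinom q m (j+1) * (q ^ (j+1) - 1) = qbinom q m j * (q ^ (m-j) - 1) := by
          rw [ih1 j, ← ih2 j]
        have hp : q ^ (m - j) * q ^ (j+1) = q ^ (m+1) := by
          rw [← pow_add, show m - j + (j+1) = m + 1 by omega]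
        linear_combination key + qbinom q m j * hp
      · rw [qbinom_eq_zero q (show m < j by omega), qbinom_eq_zero q (show m < j + 1 by omega)]
        ring
    refine ⟨A1, ?_⟩
    intro i
    cases i with
    | zero => simp [qbinom_zero_right]
    | succ i =>
      rw [pascal2, show m + 1 - (i+1) = m - i by omega, show m + 1 - 1 = m by omega]
      rcases le_or_gt i m with h | h
      · have key : qbinom q m i * (q ^ (m-i) - 1) = qbinom q m (i+1) * (q ^ (i+1) - 1) := by
          rw [ih2 i, ← ih1 i]
        have hp : q ^ (i+1) * q ^ (m - i) = q ^ (m+1) := by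
          rw [← pow_add, show i + 1 + (m - i) = m + 1 by omega]
        linear_combination key + qbinom q m (i+1) * hp
      · rw [qbinom_eq_zero q (show m < i by omega),
          qbinom_eq_zero q (show m < i + 1 by omega)]
        ring

lemma abs1 (q : R) (m j : ℕ) :
    qbinom q m (j+1) * (q ^ (j+1) - 1) = (q ^ m - 1) * qbinom q (m-1) j :=
  (abs_aux q m).1 j

lemma abs2 (q : R) (m i : ℕ) :
    qbinom q m i * (q ^ (m-i) - 1) = (q ^ m - 1) * qbinom q (m-1) i :=
  (abs_aux q m).2 i

lemma abs3 (q : R) (m i : ℕ) :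
    qbinom q m (i+1) * (q ^ (i+1) - 1) = (q ^ (m-i) - 1) * qbinom q m i := by
  cases m with
  | zero =>
    rw [qbinom_zero_succ]
    simp
  | succ m =>
    rw [abs1, show m + 1 - 1 = m by omega]
    rcases le_or_gt i m with h | h
    · rw [show m + 1 - i = (m - i) + 1 by omega]
      have := abs2 q (m+1) i
      rw [show m + 1 - i = (m-i)+1 by omega, show m + 1 - 1 = m by omega] at this
      linear_combination - this
    · rw [qbinom_eq_zero q (show m < i by omega)]
      rcases eq_or_lt_of_le (show m + 1 ≤ i by omega) with h' | h'
      · rw [← h', qbinom_diag]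
        simp
      · rw [qbinom_eq_zero q h']
        ring

lemma PhiZero (q : R) : ∀ k s : ℕ,
    ∑ j ∈ range (k+1), qbinom q (k+s-j) (k-j) * qbinom q (s+j) j *
      (q ^ (j*(s+1)) * (q^j - 1) - q ^ (j*(s+2)+(s+1)) * (q^(k-j) - 1)) = 0 := by
  intro k
  induction k with
  | zero =>
    intro s
    simp
  | succ k ih =>
    intro s
    have h_split : ∑ j ∈ range (k+2), qbinom q (k+1+s-j) (k+1-j) * qbinom q (s+j) j *
          (q ^ (j*(s+1)) * (q^j - 1) - q ^ (j*(s+2)+(s+1)) * (q^(k+1-j) - 1))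
        = (∑ j ∈ range (k+2), qbinom q (k+1+s-j) (k+1-j) * qbinom q (s+j) j *
            (q ^ (j*(s+1)) * (q^j - 1)))
          - ∑ j ∈ range (k+2), qbinom q (k+1+s-j) (k+1-j) * qbinom q (s+j) j *
            (q ^ (j*(s+2)+(s+1)) * (q^(k+1-j) - 1)) := by
      rw [← Finset.sum_sub_distrib]
      exact Finset.sum_congr rfl fun j _ => by ring
    have h_refl : ∑ j ∈ range (k+2), qbinom q (k+1+s-j) (k+1-j) * qbinom q (s+j) j *
            (q ^ (j*(s+2)+(s+1)) * (q^(k+1-j) - 1))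
        = ∑ j ∈ range (k+2), qbinom q (s+j) j * qbinom q (k+1+s-j) (k+1-j) *
            (q ^ ((k+1-j)*(s+2)+(s+1)) * (q^j - 1)) := by
      rw [← Finset.sum_range_reflect]
      refine Finset.sum_congr rfl fun j hj => ?_
      rw [Finset.mem_range] at hj
      rw [show k+2-1-j = k+1-j by omega, show k+1+s-(k+1-j) = s+j by omega,
        show k+1-(k+1-j) = j by omega, show s+(k+1-j) = k+1+s-j by omega]
    have h_comb : ∑ j ∈ range (k+2), qbinom q (k+1+s-j) (k+1-j) * qbinom q (s+j) j *
          (q ^ (j*(s+1)) * (q^j - 1) - q ^ (j*(s+2)+(s+1)) * (q^(k+1-j) - 1))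
        = ∑ j ∈ range (k+2), qbinom q (k+1+s-j) (k+1-j) * qbinom q (s+j) j * (q^j - 1) *
            (q ^ (j*(s+1)) - q ^ ((k+1-j)*(s+2)+(s+1))) := by
      rw [h_split, h_refl, ← Finset.sum_sub_distrib]
      exact Finset.sum_congr rfl fun j _ => by ring
    rw [h_comb, Finset.sum_range_succ']
    have h0 : qbinom q (k+1+s-0) (k+1-0) * qbinom q (s+0) 0 * (q^0 - 1) *
        (q ^ (0*(s+1)) - q ^ ((k+1-0)*(s+2)+(s+1))) = 0 := by
      simp
    rw [h0, add_zero]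
    have h_ab : ∀ l ∈ range (k+1),
        qbinom q (k+1+s-(l+1)) (k+1-(l+1)) * qbinom q (s+(l+1)) (l+1) * (q^(l+1) - 1) *
          (q ^ ((l+1)*(s+1)) - q ^ ((k+1-(l+1))*(s+2)+(s+1)))
        = qbinom q (k+s-l) (k-l) * ((q^(s+l+1) - 1) * qbinom q (s+l) l) *
          (q ^ ((l+1)*(s+1)) - q ^ ((k-l)*(s+2)+(s+1))) := by
      intro l hl
      rw [show k+1+s-(l+1) = k+s-l by omega, show k+1-(l+1) = k-l by omega,
        show s+(l+1) = (s+l)+1 by omega]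
      have hab := abs1 q (s+l+1) l
      rw [show s+l+1-1 = s+l by omega] at hab
      rw [show (s+l)+1 = s+l+1 by omega]
      linear_combination (qbinom q (k+s-l) (k-l) * (q ^ ((l+1)*(s+1)) - q ^ ((k-l)*(s+2)+(s+1)))) * hab
    rw [Finset.sum_congr rfl h_ab]
    -- now split into two sums, reflect second
    have h_split2 : ∑ l ∈ range (k+1), qbinom q (k+s-l) (k-l) * ((q^(s+l+1) - 1) * qbinom q (s+l) l) *
          (q ^ ((l+1)*(s+1)) - q ^ ((k-l)*(s+2)+(s+1)))
        = (∑ l ∈ range (k+1), qbinom q (k+s-l) (k-l) * ((q^(s+l+1) - 1) * qbinom q (s+l) l) *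
            q ^ ((l+1)*(s+1)))
          - ∑ l ∈ range (k+1), qbinom q (k+s-l) (k-l) * ((q^(s+l+1) - 1) * qbinom q (s+l) l) *
            q ^ ((k-l)*(s+2)+(s+1)) := by
      rw [← Finset.sum_sub_distrib]
      exact Finset.sum_congr rfl fun l _ => by ring
    have h_refl2 : ∑ l ∈ range (k+1), qbinom q (k+s-l) (k-l) * ((q^(s+l+1) - 1) * qbinom q (s+l) l) *
            q ^ ((k-l)*(s+2)+(s+1))
        = ∑ l ∈ range (k+1), qbinom q (s+l) l * ((q^(s+(k-l)+1) - 1) * qbinom q (k+s-l) (k-l)) *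
            q ^ (l*(s+2)+(s+1)) := by
      rw [← Finset.sum_range_reflect]
      refine Finset.sum_congr rfl fun l hl => ?_
      rw [Finset.mem_range] at hl
      rw [show k+1-1-l = k-l by omega, show k+s-(k-l) = s+l by omega,
        show k-(k-l) = l by omega, show s+(k-l) = k+s-l by omega]
    have h_final : ∀ l ∈ range (k+1),
        qbinom q (k+s-l) (k-l) * ((q^(s+l+1) - 1) * qbinom q (s+l) l) * q ^ ((l+1)*(s+1))
          - qbinom q (s+l) l * ((q^(s+(k-l)+1) - 1) * qbinom q (k+s-l) (k-l)) * q ^ (l*(s+2)+(s+1))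
        = q^(s+1) * (qbinom q (k+s-l) (k-l) * qbinom q (s+l) l *
            (q ^ (l*(s+1)) * (q^l - 1) - q ^ (l*(s+2)+(s+1)) * (q^(k-l) - 1))) := by
      intro l hl
      rw [Finset.mem_range] at hl
      rw [show s+(k-l)+1 = s+1+(k-l) by omega]
      ring
    rw [h_split2, h_refl2, ← Finset.sum_sub_distrib, Finset.sum_congr rfl h_final,
      ← Finset.mul_sum, ih s, mul_zero]

/-- diagonal q-binomial convolution sums -/
noncomputable def LJ (q : R) (n k : ℕ) : R :=
  ∑ j ∈ range (k+1), q ^ (j*(n+1-k)) * qbinom q (n-j) (k-j) * qbinom q (n-k+j) j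

noncomputable def LJ' (q : R) (n k : ℕ) : R :=
  ∑ j ∈ range (k+1), q ^ (j*(n+1-k)) * qbinom q (n-j) (k-j) * qbinom q (n+j-1-k) j

lemma stepA (q : R) (u c : ℕ) :
    LJ q (c+u+1) (c+1) = LJ' q (c+u+1) (c+1) + q^(2*u+1) * LJ q (c+u) c := by
  rw [LJ, LJ', LJ]
  rw [show c+u+1+1-(c+1) = u+1 by omega, show c+u+1-(c+1) = u by omega,
    show c+u+1-c = u+1 by omega, show c+u-c = u by omega]
  rw [Finset.sum_range_succ', Finset.sum_range_succ' (n := c+1)]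
  have h0 : q ^ (0*(u+1)) * qbinom q (c+u+1-0) (c+1-0) * qbinom q (u+0) 0
      = q ^ (0*(u+1)) * qbinom q (c+u+1-0) (c+1-0) * qbinom q (c+u+1+0-1-(c+1)) 0 := by
    rw [qbinom_zero_right, qbinom_zero_right]
  rw [h0, Finset.mul_sum]
  have hterm : ∀ l ∈ range (c+1),
      q ^ ((l+1)*(u+1)) * qbinom q (c+u+1-(l+1)) (c+1-(l+1)) * qbinom q (u+(l+1)) (l+1)
      = q ^ ((l+1)*(u+1)) * qbinom q (c+u+1-(l+1)) (c+1-(l+1)) * qbinom q (c+u+1+(l+1)-1-(c+1)) (l+1)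
        + q^(2*u+1) * (q ^ (l*(u+1)) * qbinom q (c+u-l) (c-l) * qbinom q (u+l) l) := by
    intro l hl
    rw [show c+u+1-(l+1) = c+u-l by omega, show c+1-(l+1) = c-l by omega,
      show c+u+1+(l+1)-1-(c+1) = u+l by omega, show u+(l+1) = (u+l)+1 by omega]
    rw [qbinom_succ_succ q (u+l) l, show u+l-l = u by omega]
    ring
  rw [Finset.sum_congr rfl hterm, Finset.sum_add_distrib]
  ring

lemma stepB (q : R) (u c : ℕ) :
    LJ' q (c+u+1+1) (c+1) = LJ q (c+u+1) (c+1) + q^(2*u+2) * LJ' q (c+u+1) c := by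
  rw [LJ', LJ, LJ']
  rw [show c+u+1+1+1-(c+1) = u+2 by omega, show c+u+1+1-(c+1) = u+1 by omega,
    show c+u+1+1-c = u+2 by omega, show c+u+1-(c+1) = u by omega]
  have hsplit : ∑ j ∈ range (c+2),
        q ^ (j*(u+2)) * qbinom q (c+u+1+1-j) (c+1-j) * qbinom q (c+u+1+1+j-1-(c+1)) j
      = (∑ j ∈ range (c+2),
          q ^ (j*(u+2)) * qbinom q (c+u+1-j) (c+1-j) * qbinom q (u+j) j)
        + ∑ j ∈ range (c+1),
          q ^ (j*(u+2)+(u+1)) * qbinom q (c+u+1-j) (c-j) * qbinom q (u+j) j := by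
    rw [Finset.sum_range_succ, Finset.sum_range_succ (n := c+1)]
    have hlast : q ^ ((c+1)*(u+2)) * qbinom q (c+u+1+1-(c+1)) (c+1-(c+1)) *
          qbinom q (c+u+1+1+(c+1)-1-(c+1)) (c+1)
        = q ^ ((c+1)*(u+2)) * qbinom q (c+u+1-(c+1)) (c+1-(c+1)) * qbinom q (u+(c+1)) (c+1) := by
      rw [show c+1-(c+1) = 0 by omega, qbinom_zero_right, qbinom_zero_right,
        show c+u+1+1+(c+1)-1-(c+1) = u+(c+1) by omega]
    rw [hlast]
    have hmid : ∀ j ∈ range (c+1),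
        q ^ (j*(u+2)) * qbinom q (c+u+1+1-j) (c+1-j) * qbinom q (c+u+1+1+j-1-(c+1)) j
        = q ^ (j*(u+2)) * qbinom q (c+u+1-j) (c+1-j) * qbinom q (u+j) j
          + q ^ (j*(u+2)+(u+1)) * qbinom q (c+u+1-j) (c-j) * qbinom q (u+j) j := by
      intro j hj
      rw [Finset.mem_range] at hj
      rw [show c+u+1+1-j = (c+u+1-j)+1 by omega, show c+1-j = (c-j)+1 by omega,
        show c+u+1+1+j-1-(c+1) = u+j by omega]
      rw [qbinom_succ_succ q (c+u+1-j) (c-j), show c+u+1-j-(c-j) = u+1 by omega]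
      ring
    rw [Finset.sum_congr rfl hmid, Finset.sum_add_distrib]
    ring
  rw [hsplit]
  have lhs_eq : (∑ j ∈ range (c+2),
        q ^ (j*(u+2)) * qbinom q (c+u+1-j) (c+1-j) * qbinom q (u+j) j)
      - (∑ j ∈ range (c+2),
        q ^ (j*(u+1)) * qbinom q (c+u+1-j) (c+1-j) * qbinom q (u+j) j)
      = ∑ j ∈ range (c+2), qbinom q (c+1+u-j) (c+1-j) * qbinom q (u+j) j *
          (q ^ (j*(u+1)) * (q^j - 1)) := by
    rw [← Finset.sum_sub_distrib]
    refine Finset.sum_congr rfl fun j hj => ?_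
    rw [show c+u+1-j = c+1+u-j by omega, show j*(u+2) = j*(u+1)+j by ring, pow_add]
    ring
  have rhs_eq : ∑ j ∈ range (c+2), qbinom q (c+1+u-j) (c+1-j) * qbinom q (u+j) j *
          (q ^ (j*(u+2)+(u+1)) * (q^(c+1-j) - 1))
      = (q^(2*u+2) * ∑ j ∈ range (c+1),
          q ^ (j*(u+2)) * qbinom q (c+u+1-j) (c-j) * qbinom q (c+u+1+j-1-c) j)
        - ∑ j ∈ range (c+1),
          q ^ (j*(u+2)+(u+1)) * qbinom q (c+u+1-j) (c-j) * qbinom q (u+j) j := by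
    rw [Finset.sum_range_succ]
    have hlast0 : qbinom q (c+1+u-(c+1)) (c+1-(c+1)) * qbinom q (u+(c+1)) (c+1) *
        (q ^ ((c+1)*(u+2)+(u+1)) * (q^(c+1-(c+1)) - 1)) = 0 := by
      rw [show c+1-(c+1) = 0 by omega]
      simp
    rw [hlast0, add_zero, Finset.mul_sum, ← Finset.sum_sub_distrib]
    refine Finset.sum_congr rfl fun j hj => ?_
    rw [Finset.mem_range] at hj
    rw [show c+u+1+j-1-c = u+j by omega, show c+u+1-j = c+1+u-j by omega]
    have ha := abs3 q (c+1+u-j) (c-j)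
    rw [show (c-j)+1 = c+1-j by omega, show c+1+u-j-(c-j) = u+1 by omega] at ha
    rw [show 2*u+2 = (u+1)+(u+1) by ring, pow_add]
    linear_combination (q ^ (j*(u+2)+(u+1)) * qbinom q (u+j) j) * ha
  have phi := PhiZero q (c+1) u
  have expand : ∑ j ∈ range (c+2), qbinom q (c+1+u-j) (c+1-j) * qbinom q (u+j) j *
        (q ^ (j*(u+1)) * (q^j - 1))
      - ∑ j ∈ range (c+2), qbinom q (c+1+u-j) (c+1-j) * qbinom q (u+j) j *
        (q ^ (j*(u+2)+(u+1)) * (q^(c+1-j) - 1))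
      = ∑ j ∈ range (c+1+1), qbinom q (c+1+u-j) (c+1-j) * qbinom q (u+j) j *
        (q ^ (j*(u+1)) * (q^j - 1) - q ^ (j*(u+2)+(u+1)) * (q^(c+1-j) - 1)) := by
    rw [← Finset.sum_sub_distrib]
    exact Finset.sum_congr rfl fun j _ => by ring
  linear_combination lhs_eq + rhs_eq + expand + phi

lemma LJ_eq (q : R) : ∀ n : ℕ,
    (∀ k, k ≤ n → LJ q n k = qbinom q (2*n+1-k) k) ∧
    (∀ k, k ≤ n → LJ' q n k = qbinom q (2*n-k) k) := by
  intro n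
  induction n with
  | zero =>
    constructor
    · intro k hk
      interval_cases k
      simp [LJ, qbinom_zero_right]
    · intro k hk
      interval_cases k
      simp [LJ', qbinom_zero_right]
  | succ n ih =>
    obtain ⟨ih1, ih2⟩ := ih
    have h2 : ∀ k, k ≤ n + 1 → LJ' q (n+1) k = qbinom q (2*(n+1)-k) k := by
      intro k hk
      rcases Nat.eq_zero_or_eq_succ_pred k with hk0 | hkc
      · subst hk0
        simp [LJ', qbinom_zero_right]
      · obtain ⟨c, rfl⟩ : ∃ c, k = c + 1 := ⟨k - 1, by omega⟩
        rcases le_or_gt (c+1) n with hcn | hcn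
        · -- use stepB with u = n-1-c
          have hs := stepB q (n-1-c) c
          rw [show c+(n-1-c)+1+1 = n+1 by omega, show c+(n-1-c)+1 = n by omega] at hs
          rw [hs, ih1 (c+1) hcn, ih2 c (by omega)]
          rw [show 2*(n+1)-(c+1) = (2*n-c)+1 by omega, show 2*n+1-(c+1) = 2*n-c by omega]
          rw [qbinom_succ_succ q (2*n-c) c, show 2*n-c-c = 2*(n-1-c)+2 by omega]
          ring
        · -- k = n+1
          have hc : c = n := by omega
          rw [hc]
          rw [show 2*(n+1)-(n+1) = n+1 by omega, qbinom_diag, LJ']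
          rw [Finset.sum_range_succ']
          have h0 : q ^ (0*(n+1+1-(n+1))) * qbinom q (n+1-0) (n+1-0) *
              qbinom q (n+1+0-1-(n+1)) 0 = 1 := by
            rw [qbinom_zero_right, qbinom_diag]
            norm_num
          have hz : ∀ l ∈ range (n+1),
              q ^ ((l+1)*(n+1+1-(n+1))) * qbinom q (n+1-(l+1)) (n+1-(l+1)) *
                qbinom q (n+1+(l+1)-1-(n+1)) (l+1) = 0 := by
            intro l hl
            rw [show n+1+(l+1)-1-(n+1) = l by omega, qbinom_eq_zero q (show l < l + 1 by omega)]
            ring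
          rw [Finset.sum_eq_zero hz, h0, zero_add]
    refine ⟨?_, h2⟩
    intro k hk
    rcases Nat.eq_zero_or_eq_succ_pred k with hk0 | hkc
    · subst hk0
      simp [LJ, qbinom_zero_right]
    · obtain ⟨c, rfl⟩ : ∃ c, k = c + 1 := ⟨k - 1, by omega⟩
      have hs := stepA q (n-c) c
      rw [show c+(n-c)+1 = n+1 by omega, show c+(n-c) = n by omega] at hs
      rw [hs, h2 (c+1) hk, ih1 c (by omega)]
      rw [show 2*(n+1)+1-(c+1) = (2*n+1-c)+1 by omega, show 2*(n+1)-(c+1) = 2*n+1-c by omega]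
      rw [qbinom_succ_succ q (2*n+1-c) c, show 2*n+1-c-c = 2*(n-c)+1 by omega]
      ring

noncomputable def Gs (a b q : R) (n : ℕ) : R :=
  ∑ k ∈ range (n+1), (a*b)^(n-k) * q^(k^2) * qbinom q (2*n+1-k) k

noncomputable def Hs (a b q : R) (n : ℕ) : R :=
  ∑ k ∈ range (n+1), (a*b)^(n-k) * q^(k^2) * qbinom q (2*n-k) k

lemma Hstep (a b q : R) (n : ℕ) :
    Hs a b q (n+1) = (a*b) * Gs a b q n + q^(2*n+1) * Hs a b q n := by
  have h0 : (a*b)^(n+1-0) * q^(0^2) * qbinom q (2*(n+1)-0) 0 = (a*b)^(n+1) := by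
    rw [qbinom_zero_right]; norm_num
  have hterm : ∀ l ∈ range (n+1),
      (a*b)^(n+1-(l+1)) * q^((l+1)^2) * qbinom q (2*(n+1)-(l+1)) (l+1)
      = q^(2*n+1) * ((a*b)^(n-l) * q^(l^2) * qbinom q (2*n-l) l)
        + (a*b)^(n-l) * q^((l+1)^2) * qbinom q (2*n-l) (l+1) := by
    intro l hl
    rw [Finset.mem_range] at hl
    rw [show n+1-(l+1) = n-l by omega, show 2*(n+1)-(l+1) = (2*n-l)+1 by omega,
      qbinom_succ_succ q (2*n-l) l]
    have hp : q^((l+1)^2) * q^(2*n-l-l) = q^(2*n+1) * q^(l^2) := by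
      rw [← pow_add, ← pow_add, show (l+1)^2+(2*n-l-l) = 2*n+1+l^2 by
        have h2 : (l+1)^2 = l^2+2*l+1 := by ring
        omega]
    linear_combination ((a*b)^(n-l) * qbinom q (2*n-l) l) * hp
  have hL : ∑ k ∈ range (n+1+1), (a*b)^(n+1-k) * q^(k^2) * qbinom q (2*(n+1)-k) k
      = (∑ l ∈ range (n+1), q^(2*n+1) * ((a*b)^(n-l) * q^(l^2) * qbinom q (2*n-l) l))
        + ((∑ l ∈ range (n+1), (a*b)^(n-l) * q^((l+1)^2) * qbinom q (2*n-l) (l+1))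
          + (a*b)^(n+1)) := by
    rw [Finset.sum_range_succ', h0, Finset.sum_congr rfl hterm, Finset.sum_add_distrib]
    ring
  have hg0 : a * b * ((a*b)^(n-0) * q^(0^2) * qbinom q (2*n+1-0) 0) = (a*b)^(n+1) := by
    rw [qbinom_zero_right, show n - 0 = n by omega]
    rw [show a * b * ((a*b)^n * q^(0^2) * 1) = (a*b)^(n+1) * q^(0^2) from by ring]
    norm_num
  have hgterm : ∀ l ∈ range n,
      a * b * ((a*b)^(n-(l+1)) * q^((l+1)^2) * qbinom q (2*n+1-(l+1)) (l+1))
      = (a*b)^(n-l) * q^((l+1)^2) * qbinom q (2*n-l) (l+1) := by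
    intro l hl
    rw [Finset.mem_range] at hl
    rw [show 2*n+1-(l+1) = 2*n-l by omega]
    have hab : a * b * (a*b)^(n-(l+1)) = (a*b)^(n-l) := by
      rw [← pow_succ', show n-(l+1)+1 = n-l by omega]
    linear_combination (q^((l+1)^2) * qbinom q (2*n-l) (l+1)) * hab
  have hR : (a*b) * ∑ k ∈ range (n+1), (a*b)^(n-k) * q^(k^2) * qbinom q (2*n+1-k) k
      = (∑ l ∈ range n, (a*b)^(n-l) * q^((l+1)^2) * qbinom q (2*n-l) (l+1)) + (a*b)^(n+1) := by
    rw [Finset.mul_sum, Finset.sum_range_succ', hg0, Finset.sum_congr rfl hgterm]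
  have hz : ∑ l ∈ range (n+1), (a*b)^(n-l) * q^((l+1)^2) * qbinom q (2*n-l) (l+1)
      = ∑ l ∈ range n, (a*b)^(n-l) * q^((l+1)^2) * qbinom q (2*n-l) (l+1) := by
    rw [Finset.sum_range_succ, show 2*n-n = n by omega,
      qbinom_eq_zero q (show n < n+1 by omega)]
    ring
  have hN1 : q^(2*n+1) * ∑ k ∈ range (n+1), (a*b)^(n-k) * q^(k^2) * qbinom q (2*n-k) k
      = ∑ l ∈ range (n+1), q^(2*n+1) * ((a*b)^(n-l) * q^(l^2) * qbinom q (2*n-l) l) :=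
    Finset.mul_sum _ _ _
  rw [Hs, Gs, Hs]
  linear_combination hL + hz - hR - hN1

lemma Gstep (a b q : R) (n : ℕ) :
    Gs a b q (n+1) = Hs a b q (n+1) + q^(2*n+2) * Gs a b q n := by
  have h0 : (a*b)^(n+1-0) * q^(0^2) * qbinom q (2*(n+1)+1-0) 0 = (a*b)^(n+1) := by
    rw [qbinom_zero_right]; norm_num
  have h0' : (a*b)^(n+1-0) * q^(0^2) * qbinom q (2*(n+1)-0) 0 = (a*b)^(n+1) := by
    rw [qbinom_zero_right]; norm_num
  have hterm : ∀ l ∈ range (n+1),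
      (a*b)^(n+1-(l+1)) * q^((l+1)^2) * qbinom q (2*(n+1)+1-(l+1)) (l+1)
      = (a*b)^(n+1-(l+1)) * q^((l+1)^2) * qbinom q (2*(n+1)-(l+1)) (l+1)
        + q^(2*n+2) * ((a*b)^(n-l) * q^(l^2) * qbinom q (2*n+1-l) l) := by
    intro l hl
    rw [Finset.mem_range] at hl
    rw [show 2*(n+1)+1-(l+1) = (2*n+1-l)+1 by omega, qbinom_succ_succ q (2*n+1-l) l,
      show 2*(n+1)-(l+1) = 2*n+1-l by omega, show n+1-(l+1) = n-l by omega]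
    have hp : q^((l+1)^2) * q^(2*n+1-l-l) = q^(2*n+2) * q^(l^2) := by
      rw [← pow_add, ← pow_add, show (l+1)^2+(2*n+1-l-l) = 2*n+2+l^2 by
        have h2 : (l+1)^2 = l^2+2*l+1 := by ring
        omega]
    linear_combination ((a*b)^(n-l) * qbinom q (2*n+1-l) l) * hp
  have hL : ∑ k ∈ range (n+1+1), (a*b)^(n+1-k) * q^(k^2) * qbinom q (2*(n+1)+1-k) k
      = ((∑ l ∈ range (n+1), (a*b)^(n+1-(l+1)) * q^((l+1)^2) * qbinom q (2*(n+1)-(l+1)) (l+1))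
        + ∑ l ∈ range (n+1), q^(2*n+2) * ((a*b)^(n-l) * q^(l^2) * qbinom q (2*n+1-l) l))
        + (a*b)^(n+1) := by
    rw [Finset.sum_range_succ', h0, Finset.sum_congr rfl hterm, Finset.sum_add_distrib]
  have hR : ∑ k ∈ range (n+1+1), (a*b)^(n+1-k) * q^(k^2) * qbinom q (2*(n+1)-k) k
      = (∑ l ∈ range (n+1), (a*b)^(n+1-(l+1)) * q^((l+1)^2) * qbinom q (2*(n+1)-(l+1)) (l+1))
        + (a*b)^(n+1) := by
    rw [Finset.sum_range_succ', h0']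
  have hN : q^(2*n+2) * ∑ k ∈ range (n+1), (a*b)^(n-k) * q^(k^2) * qbinom q (2*n+1-k) k
      = ∑ l ∈ range (n+1), q^(2*n+2) * ((a*b)^(n-l) * q^(l^2) * qbinom q (2*n+1-l) l) :=
    Finset.mul_sum _ _ _
  rw [Gs, Hs, Gs]
  linear_combination hL - hR - hN

lemma biF_pair (a b q : R) : ∀ n : ℕ,
    biF a b q (2*n+1) = Hs a b q n ∧ biF a b q (2*n+2) = a * Gs a b q n := by
  intro n
  induction n with
  | zero =>
    constructor
    · show biF a b q 1 = _
      simp [Hs, biF, qbinom_zero_right]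
    · show biF a b q 2 = _
      simp [Gs, biF, qbinom_zero_right]
  | succ n ih =>
    obtain ⟨ih1, ih2⟩ := ih
    have e1 : biF a b q (2*(n+1)+1) = b * biF a b q (2*n+2) + q^(2*n+1) * biF a b q (2*n+1) := by
      rw [show 2*(n+1)+1 = (2*n+1)+2 by ring]
      rw [show biF a b q ((2*n+1)+2)
          = (if ((2*n+1)+2) % 2 = 0 then a else b) * biF a b q ((2*n+1)+1)
            + q^(2*n+1) * biF a b q (2*n+1) from rfl]
      rw [if_neg (by omega), show (2*n+1)+1 = 2*n+2 by ring]
    have e2 : biF a b q (2*(n+1)+2) = a * biF a b q (2*(n+1)+1) + q^(2*n+2) * biF a b q (2*n+2) := by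
      rw [show 2*(n+1)+2 = (2*n+2)+2 by ring]
      rw [show biF a b q ((2*n+2)+2)
          = (if ((2*n+2)+2) % 2 = 0 then a else b) * biF a b q ((2*n+2)+1)
            + q^(2*n+2) * biF a b q (2*n+2) from rfl]
      rw [if_pos (by omega), show (2*n+2)+1 = 2*(n+1)+1 by ring]
    have hodd : biF a b q (2*(n+1)+1) = Hs a b q (n+1) := by
      rw [e1, ih2, ih1, Hstep]
      ring
    refine ⟨hodd, ?_⟩
    rw [e2, hodd, ih2, Gstep]
    ring

lemma tri (f : ℕ → ℕ → R) : ∀ n : ℕ,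
    ∑ i ∈ range (n+1), ∑ j ∈ range (n+1-i), f i j
    = ∑ k ∈ range (n+1), ∑ j ∈ range (k+1), f (k-j) j := by
  intro n
  induction n with
  | zero => simp
  | succ n ih =>
    have hL : ∑ i ∈ range (n+2), ∑ j ∈ range (n+2-i), f i j
        = (∑ i ∈ range (n+1), ∑ j ∈ range (n+1-i), f i j)
          + ∑ i ∈ range (n+2), f i (n+1-i) := by
      have hper : ∀ i ∈ range (n+2), ∑ j ∈ range (n+2-i), f i j
          = (∑ j ∈ range (n+1-i), f i j) + f i (n+1-i) := by
        intro i hi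
        rw [Finset.mem_range] at hi
        rw [show n+2-i = (n+1-i)+1 by omega, Finset.sum_range_succ]
      rw [Finset.sum_congr rfl hper, Finset.sum_add_distrib]
      congr 1
      rw [Finset.sum_range_succ, show n+1-(n+1) = 0 by omega]
      simp
    have hswap : ∑ i ∈ range (n+2), f i (n+1-i) = ∑ j ∈ range (n+2), f (n+1-j) j := by
      rw [← Finset.sum_range_reflect (fun j => f (n+1-j) j) (n+2)]
      refine Finset.sum_congr rfl fun i hi => ?_
      rw [Finset.mem_range] at hi
      rw [show n+1-(n+2-1-i) = i by omega, show n+2-1-i = n+1-i by omega]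
    rw [hL, hswap, ih]
    conv_rhs => rw [Finset.sum_range_succ]

theorem stmt18 (a b q : R) (n : ℕ) :
    biF a b q (2 * n + 2) =
      a * ∑ i ∈ Finset.range (n + 1), ∑ j ∈ Finset.range (n + 1),
        (a * b) ^ ((n - i - j) % 2) * q ^ (i ^ 2 + (n + i + 1) * j) *
          qbinom q (n - j) i * qbinom q (n - i) j * (a * b) ^ (2 * ((n - i - j) / 2)) := by
  have h2 := (biF_pair a b q n).2
  rw [h2]
  congr 1
  -- Gs = the double sum
  have step1 : Gs a b q n = ∑ k ∈ range (n+1), ∑ j ∈ range (k+1),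
      (a*b)^(n-(k-j)-j) * q^((k-j)^2+(n+(k-j)+1)*j) * qbinom q (n-j) (k-j)
        * qbinom q (n-(k-j)) j := by
    rw [Gs]
    refine Finset.sum_congr rfl fun k hk => ?_
    rw [Finset.mem_range] at hk
    rw [← (LJ_eq q n).1 k (by omega), LJ, Finset.mul_sum]
    refine Finset.sum_congr rfl fun j hj => ?_
    rw [Finset.mem_range] at hj
    obtain ⟨i, rfl⟩ : ∃ i, k = j + i := ⟨k - j, by omega⟩
    obtain ⟨s, rfl⟩ : ∃ s, n = j + i + s := ⟨n - (j+i), by omega⟩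
    rw [show j+i-j = i by omega]
    rw [show j+i+s-i-j = s by omega, show j+i+s-i = s+j by omega,
      show j+i+s-(j+i) = s by omega, show j+i+s+1-(j+i) = s+1 by omega,
      show j+i+s-j = i+s by omega]
    ring
  rw [step1, ← tri (fun i j => (a*b)^(n-i-j) * q^(i^2+(n+i+1)*j) * qbinom q (n-j) i
      * qbinom q (n-i) j) n]
  refine Finset.sum_congr rfl fun i hi => ?_
  rw [Finset.mem_range] at hi
  have hsub : ∑ j ∈ range (n+1), (a * b) ^ ((n - i - j) % 2) * q ^ (i ^ 2 + (n + i + 1) * j) *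
        qbinom q (n - j) i * qbinom q (n - i) j * (a * b) ^ (2 * ((n - i - j) / 2))
      = ∑ j ∈ range (n+1-i), (a * b) ^ ((n - i - j) % 2) * q ^ (i ^ 2 + (n + i + 1) * j) *
        qbinom q (n - j) i * qbinom q (n - i) j * (a * b) ^ (2 * ((n - i - j) / 2)) := by
    refine (Finset.sum_subset (Finset.range_subset_range.2 (by omega)) fun j hj hnj => ?_).symm
    rw [Finset.mem_range] at hj
    rw [Finset.mem_range, not_lt] at hnj
    rw [qbinom_eq_zero q (show n - i < j by omega)]
    ring
  rw [hsub]
  refine Finset.sum_congr rfl fun j hj => ?_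
  rw [Finset.mem_range] at hj
  rw [show (a * b) ^ ((n - i - j) % 2) * q ^ (i ^ 2 + (n + i + 1) * j) *
        qbinom q (n - j) i * qbinom q (n - i) j * (a * b) ^ (2 * ((n - i - j) / 2))
      = (a * b) ^ ((n - i - j) % 2 + 2 * ((n - i - j) / 2)) *
        (q ^ (i ^ 2 + (n + i + 1) * j) * qbinom q (n - j) i * qbinom q (n - i) j) from by
    rw [pow_add]; ring]
  rw [show (n - i - j) % 2 + 2 * ((n - i - j) / 2) = n - i - j by omega]
  ring
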